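/- arXiv:1910.06906 — 8 statements merged into one kernel-verified Lean document; each statement's English description precedes it below -/
import Mathlib

section
/- For every real number φ, the line ℓ_φ contains the three deltoid points z(−2φ), z(φ) and z(φ+π); explicitly, z(−2φ) = e^{−2iφ} + (2cos 3φ)·e^{iφ}, z(φ) = e^{−2iφ} + 2·e^{iφ} and z(φ+π) = e^{−2iφ} − 2·e^{iφ}. -/
open Real

/-- The deltoid curve `z(θ) = 2e^{iθ} + e^{-2iθ}` in `ℂ`. -/
noncomputable def deltoid (θ : ℝ) : ℂ :=
  2 * Complex.exp ((θ : ℂ) * Complex.I) + Complex.exp (((-(2 * θ) : ℝ) : ℂ) * Complex.I)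

/-- The tangent line `ℓ_φ = {e^{-2iφ} + t e^{iφ} : t ∈ ℝ}`. -/
noncomputable def tline (φ : ℝ) : Set ℂ :=
  {w : ℂ | ∃ t : ℝ, w = Complex.exp (((-(2 * φ) : ℝ) : ℂ) * Complex.I) +
      (t : ℂ) * Complex.exp ((φ : ℂ) * Complex.I)}

theorem stmt_0 (φ : ℝ) :
    deltoid (-2 * φ) = Complex.exp (((-(2 * φ) : ℝ) : ℂ) * Complex.I) +
        ((2 * Real.cos (3 * φ) : ℝ) : ℂ) * Complex.exp ((φ : ℂ) * Complex.I) ∧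
    deltoid φ = Complex.exp (((-(2 * φ) : ℝ) : ℂ) * Complex.I) +
        2 * Complex.exp ((φ : ℂ) * Complex.I) ∧
    deltoid (φ + π) = Complex.exp (((-(2 * φ) : ℝ) : ℂ) * Complex.I) -
        2 * Complex.exp ((φ : ℂ) * Complex.I) ∧
    deltoid (-2 * φ) ∈ tline φ ∧ deltoid φ ∈ tline φ ∧ deltoid (φ + π) ∈ tline φ := by
  set E : ℂ := Complex.exp ((φ : ℂ) * Complex.I) with hE
  clear_value E
  have hEne : E ≠ 0 := by rw [hE]; exact Complex.exp_ne_zero _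
  have hk : ∀ n : ℤ, Complex.exp ((n : ℂ) * ((φ : ℂ) * Complex.I)) = E ^ n := fun n => by
    rw [hE]; exact Complex.exp_int_mul _ _
  have h1 : deltoid (-2 * φ) = Complex.exp (((-(2 * φ) : ℝ) : ℂ) * Complex.I) +
      ((2 * Real.cos (3 * φ) : ℝ) : ℂ) * E := by
    have e2 : Complex.exp (((-(2 * φ) : ℝ) : ℂ) * Complex.I) = E ^ (-2 : ℤ) := by
      rw [← hk]; push_cast; ring_nf
    have e4 : Complex.exp (((-(2 * (-2 * φ)) : ℝ) : ℂ) * Complex.I) = E ^ (4 : ℤ) := by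
      rw [← hk]; push_cast; ring_nf
    have ea : Complex.exp (((-2 * φ : ℝ) : ℂ) * Complex.I) = E ^ (-2 : ℤ) := by
      rw [← hk]; push_cast; ring_nf
    have ec : ((2 * Real.cos (3 * φ) : ℝ) : ℂ) = E ^ (3 : ℤ) + E ^ (-3 : ℤ) := by
      push_cast
      rw [Complex.cos, ← hk 3, ← hk (-3)]
      push_cast; ring_nf
    rw [deltoid, ea, e4, e2, ec]
    have h3ne : E ^ 3 ≠ 0 := pow_ne_zero _ hEne
    have h2ne : E ^ 2 ≠ 0 := pow_ne_zero _ hEne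
    rw [zpow_neg, zpow_neg, show ((4:ℤ)) = ((4:ℕ):ℤ) by norm_num,
      show ((3:ℤ)) = ((3:ℕ):ℤ) by norm_num, show ((2:ℤ)) = ((2:ℕ):ℤ) by norm_num,
      zpow_natCast, zpow_natCast, zpow_natCast]
    field_simp
    ring
  have h2 : deltoid φ = Complex.exp (((-(2 * φ) : ℝ) : ℂ) * Complex.I) +
      2 * E := by
    rw [deltoid, hE]; ring
  have h3 : deltoid (φ + π) = Complex.exp (((-(2 * φ) : ℝ) : ℂ) * Complex.I) -
      2 * E := by
    rw [deltoid]
    have eπ : Complex.exp (((φ + π : ℝ) : ℂ) * Complex.I) = -E := by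
      push_cast
      rw [add_mul, Complex.exp_add, Complex.exp_pi_mul_I, hE]
      ring
    have e2π : Complex.exp (((-(2 * (φ + π)) : ℝ) : ℂ) * Complex.I)
        = Complex.exp (((-(2 * φ) : ℝ) : ℂ) * Complex.I) := by
      push_cast
      rw [show (-(2 * ((φ:ℂ) + (π:ℂ)))) * Complex.I
          = (-(2 * (φ:ℂ))) * Complex.I + -(2 * (π:ℂ) * Complex.I) by ring,
        Complex.exp_add, Complex.exp_neg, Complex.exp_two_pi_mul_I]
      simp
    rw [eπ, e2π]; ring
  subst hE
  exact ⟨h1, h2, h3, ⟨2 * Real.cos (3 * φ), h1⟩, ⟨2, by rw [h2]; push_cast; ring⟩,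
    ⟨-2, by rw [h3]; push_cast; ring⟩⟩
end

section
/- For every real number φ, the velocity of the deltoid at parameter −2φ is parallel to the direction of the line ℓ_φ: writing z(θ) = 2e^{iθ} + e^{−2iθ}, one has z′(−2φ) = 4 sin(3φ)·e^{iφ}. In particular ℓ_φ is tangent to the deltoid at z(−2φ) whenever sin(3φ) ≠ 0. -/
open Real

lemma deltoid_hasDeriv (θ : ℝ) :
    HasDerivAt deltoid
      (2 * Complex.I * Complex.exp ((θ : ℂ) * Complex.I)
        - 2 * Complex.I * Complex.exp ((-(2 * θ) : ℂ) * Complex.I)) θ := by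
  have hg : HasDerivAt (fun z : ℂ => 2 * Complex.exp (z * Complex.I)
        + Complex.exp ((-(2 * z)) * Complex.I))
      (2 * Complex.I * Complex.exp ((θ : ℂ) * Complex.I)
        - 2 * Complex.I * Complex.exp ((-(2 * θ) : ℂ) * Complex.I)) (θ : ℂ) := by
    have h1 : HasDerivAt (fun z : ℂ => z * Complex.I) Complex.I (θ : ℂ) := by
      simpa using (hasDerivAt_id (θ:ℂ)).mul_const Complex.I
    have h2 : HasDerivAt (fun z : ℂ => (-(2 * z)) * Complex.I) (-(2 * Complex.I)) (θ : ℂ) := by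
      have : HasDerivAt (fun z : ℂ => (-(2 * z))) (-2) (θ : ℂ) := by
        simpa using ((hasDerivAt_id (θ:ℂ)).const_mul (2:ℂ)).fun_neg
      simpa using this.mul_const Complex.I
    have := (h1.cexp.const_mul (2:ℂ)).fun_add h2.cexp
    refine this.congr_deriv ?_
    ring
  have := hg.comp_ofReal
  convert this using 1
  funext x
  unfold deltoid
  push_cast
  ring

lemma key (φ : ℝ) : deriv deltoid (-2 * φ) =
    ((4 * Real.sin (3 * φ) : ℝ) : ℂ) * Complex.exp ((φ : ℂ) * Complex.I) := by
  rw [(deltoid_hasDeriv (-2 * φ)).deriv]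
  have hs : ((Real.sin (3 * φ) : ℝ) : ℂ)
      = (Complex.exp (-(3 * φ) * Complex.I) - Complex.exp ((3 * φ : ℂ) * Complex.I))
        * Complex.I / 2 := by
    rw [Complex.ofReal_sin, Complex.sin]
    push_cast
    ring_nf
  have e1 : Complex.exp (((-2 * φ : ℝ) : ℂ) * Complex.I)
      = Complex.exp (-(3 * φ) * Complex.I) * Complex.exp ((φ : ℂ) * Complex.I) := by
    rw [← Complex.exp_add]; push_cast; ring_nf
  have e2 : Complex.exp ((-(2 * ((-2 * φ : ℝ)) : ℝ) : ℂ) * Complex.I)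
      = Complex.exp ((3 * φ : ℂ) * Complex.I) * Complex.exp ((φ : ℂ) * Complex.I) := by
    rw [← Complex.exp_add]; push_cast; ring_nf
  push_cast [hs]
  push_cast at e1 e2
  rw [e1, e2]
  ring_nf

theorem stmt_1 (φ : ℝ) :
    deriv deltoid (-2 * φ) =
      ((4 * Real.sin (3 * φ) : ℝ) : ℂ) * Complex.exp ((φ : ℂ) * Complex.I) ∧
    (Real.sin (3 * φ) ≠ 0 →
      deltoid (-2 * φ) ∈ tline φ ∧
      ∃ t : ℝ, t ≠ 0 ∧
        deriv deltoid (-2 * φ) = (t : ℂ) * Complex.exp ((φ : ℂ) * Complex.I)) := by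
  refine ⟨key φ, fun hs => ⟨⟨2 * Real.cos (3 * φ), ?_⟩,
    4 * Real.sin (3 * φ), mul_ne_zero (by norm_num) hs, key φ⟩⟩
  unfold deltoid
  set u := Complex.exp ((φ : ℂ) * Complex.I) with hu_def
  have hu : u ≠ 0 := Complex.exp_ne_zero _
  have E : ∀ n : ℤ, Complex.exp (((n : ℂ)) * ((φ : ℂ) * Complex.I)) = u ^ n := by
    intro n; exact Complex.exp_int_mul _ n
  have e1 : Complex.exp (((-(2 * φ) : ℝ) : ℂ) * Complex.I) = u ^ (-2 : ℤ) := by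
    rw [← E (-2)]; congr 1; push_cast; ring
  have e0 : Complex.exp (((-2 * φ : ℝ) : ℂ) * Complex.I) = u ^ (-2 : ℤ) := by
    rw [← E (-2)]; congr 1; push_cast; ring
  have e2 : Complex.exp (((-(2 * (-2 * φ)) : ℝ) : ℂ) * Complex.I) = u ^ (4 : ℤ) := by
    rw [← E 4]; congr 1; push_cast; ring
  have e3 : Complex.exp ((3 * φ : ℂ) * Complex.I) = u ^ (3 : ℤ) := by
    rw [← E 3]; congr 1; push_cast; ring
  have e4 : Complex.exp (-(3 * φ : ℂ) * Complex.I) = u ^ (-3 : ℤ) := by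
    rw [← E (-3)]; congr 1; push_cast; ring
  have hc : ((2 * Real.cos (3 * φ) : ℝ) : ℂ) = u ^ (3 : ℤ) + u ^ (-3 : ℤ) := by
    push_cast [Complex.ofReal_cos, Complex.cos]
    rw [← e3, ← e4]; ring_nf
  rw [e0, e1, e2, hc]
  have : u ^ (4 : ℤ) = u ^ (-2 : ℤ) + (u ^ (3 : ℤ) + u ^ (-3 : ℤ)) * u - 2 * u ^ (-2 : ℤ) := by
    have h34 : u ^ (3 : ℤ) * u = u ^ (4 : ℤ) := by
      rw [show (4:ℤ) = 3 + 1 by norm_num, zpow_add_one₀ hu 3]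
    have h32 : u ^ (-3 : ℤ) * u = u ^ (-2 : ℤ) := by
      rw [show (-2 : ℤ) = -3 + 1 by norm_num, zpow_add_one₀ hu (-3)]
    linear_combination -h34 - h32
  rw [this]; ring
end

section
/- If 0 ≤ φ < χ < ψ < π and ω := φ + χ + ψ, then |p(φ,ψ) − p(φ,χ)| = 4|sin ω|·sin(ψ − χ). -/
open Real

/-- The intersection point `p(φ,ψ)` of the deltoid tangent lines `ℓ_φ` and `ℓ_ψ`. -/
noncomputable def ipt (φ ψ : ℝ) : ℂ :=
  ((3 - 4 * (Real.sin φ ^ 2 - Real.sin φ ^ 2 * Real.sin ψ ^ 2 + Real.sin ψ ^ 2 +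
      Real.cos φ * Real.cos ψ * Real.sin φ * Real.sin ψ) : ℝ) : ℂ) +
    ((-4 * Real.sin φ * Real.sin ψ * Real.sin (φ + ψ) : ℝ) : ℂ) * Complex.I

theorem stmt_4 (φ χ ψ : ℝ) (h0 : 0 ≤ φ) (h1 : φ < χ) (h2 : χ < ψ) (h3 : ψ < π)
    (ω : ℝ) (hω : ω = φ + χ + ψ) :
    ‖ipt φ ψ - ipt φ χ‖ = 4 * |Real.sin ω| * Real.sin (ψ - χ) := by
  have key : ipt φ ψ - ipt φ χ =
      ((-4 * Real.sin (ψ - χ) * Real.sin ω : ℝ) : ℂ) *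
        (Real.cos φ + Real.sin φ * Complex.I) := by
    subst hω
    apply Complex.ext <;>
      simp only [ipt, Complex.sub_re, Complex.sub_im, Complex.add_re, Complex.add_im,
        Complex.mul_re, Complex.mul_im, Complex.ofReal_re, Complex.ofReal_im,
        Complex.I_re, Complex.I_im,
        Real.sin_sub, Real.sin_add, Real.cos_add]
    · linear_combination (4 * Real.sin ψ ^ 2 - 4 * Real.sin χ ^ 2) * Real.sin_sq_add_cos_sq φ +
        (4 * Real.cos φ ^ 2 - 4 * Real.cos φ ^ 2 * Real.cos ψ ^ 2 +
          4 * Real.sin φ * Real.cos φ * Real.sin ψ * Real.cos ψ) * Real.sin_sq_add_cos_sq χ +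
        (-4 * Real.cos φ ^ 2 + 4 * Real.cos φ ^ 2 * Real.cos χ ^ 2 -
          4 * Real.sin φ * Real.cos φ * Real.sin χ * Real.cos χ) * Real.sin_sq_add_cos_sq ψ
    · linear_combination (-4 * Real.sin ψ * Real.cos ψ + 4 * Real.cos χ ^ 2 * Real.sin ψ * Real.cos ψ +
          4 * Real.sin χ * Real.cos χ - 4 * Real.sin χ * Real.cos χ * Real.cos ψ ^ 2 -
          4 * Real.sin χ * Real.cos χ * Real.sin ψ ^ 2 +
          4 * Real.sin χ ^ 2 * Real.sin ψ * Real.cos ψ) * Real.sin_sq_add_cos_sq φ +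
        (4 * Real.sin ψ * Real.cos ψ - 4 * Real.cos φ ^ 2 * Real.sin ψ * Real.cos ψ +
          4 * Real.sin φ * Real.cos φ - 4 * Real.sin φ * Real.cos φ * Real.cos ψ ^ 2) *
          Real.sin_sq_add_cos_sq χ +
        (-4 * Real.sin χ * Real.cos χ + 4 * Real.cos φ ^ 2 * Real.sin χ * Real.cos χ -
          4 * Real.sin φ * Real.cos φ + 4 * Real.sin φ * Real.cos φ * Real.cos χ ^ 2) *
          Real.sin_sq_add_cos_sq ψ
  have habs : ‖(Real.cos φ : ℂ) + (Real.sin φ : ℂ) * Complex.I‖ = 1 := by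
    rw [Complex.norm_def, Complex.normSq_add_mul_I]
    rw [Real.cos_sq_add_sin_sq, Real.sqrt_one]
  rw [key, norm_mul, habs, mul_one, Complex.norm_real, Real.norm_eq_abs]
  have hs : 0 < Real.sin (ψ - χ) :=
    Real.sin_pos_of_pos_of_lt_pi (by linarith) (by linarith)
  rw [abs_mul, abs_mul]
  rw [abs_of_pos hs]
  simp [abs_of_nonneg]
  ring
end

section
/- Let d ≥ 5 be an integer, κ ∈ {−2, 0, 2} (with 3 | d when κ = ±2), and let 0 ≤ λ < μ < ν < d be integers with σ := λ + μ + ν ≢ κ (mod d). Then the three points v₁ = p(φ_λ,φ_μ), v₂ = p(φ_λ,φ_ν), v₃ = p(φ_μ,φ_ν) are pairwise distinct and form a triangle with side lengths |v₁ − v₂| = 4|s_{σ−κ}|·s_{ν−μ}, |v₁ − v₃| = 4|s_{σ−κ}|·s_{d+λ−ν}, |v₂ − v₃| = 4|s_{σ−κ}|·s_{μ−λ}, where s_a := sin(aπ/d). -/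
open Real

lemma ipt_comm (φ ψ : ℝ) : ipt φ ψ = ipt ψ φ := by
  unfold ipt
  rw [add_comm ψ φ]
  push_cast
  ring

lemma ipt_dist (a b c : ℝ) :
    ‖ipt a b - ipt a c‖ =
      4 * |Real.sin (a + b + c)| * |Real.sin (b - c)| := by
  have hz : ipt a b - ipt a c =
      (((3 - 4 * (Real.sin a ^ 2 - Real.sin a ^ 2 * Real.sin b ^ 2 + Real.sin b ^ 2 +
        Real.cos a * Real.cos b * Real.sin a * Real.sin b)) -
        (3 - 4 * (Real.sin a ^ 2 - Real.sin a ^ 2 * Real.sin c ^ 2 + Real.sin c ^ 2 +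
        Real.cos a * Real.cos c * Real.sin a * Real.sin c)) : ℝ) : ℂ) +
      (((-4 * Real.sin a * Real.sin b * Real.sin (a + b)) -
        (-4 * Real.sin a * Real.sin c * Real.sin (a + c)) : ℝ) : ℂ) * Complex.I := by
    unfold ipt
    push_cast
    ring
  rw [hz, Complex.norm_add_mul_I]
  have key : ((3 - 4 * (Real.sin a ^ 2 - Real.sin a ^ 2 * Real.sin b ^ 2 + Real.sin b ^ 2 +
        Real.cos a * Real.cos b * Real.sin a * Real.sin b)) -
        (3 - 4 * (Real.sin a ^ 2 - Real.sin a ^ 2 * Real.sin c ^ 2 + Real.sin c ^ 2 +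
        Real.cos a * Real.cos c * Real.sin a * Real.sin c))) ^ 2 +
      ((-4 * Real.sin a * Real.sin b * Real.sin (a + b)) -
        (-4 * Real.sin a * Real.sin c * Real.sin (a + c))) ^ 2 =
      (4 * Real.sin (a + b + c) * Real.sin (b - c)) ^ 2 := by
    have ha := Real.sin_sq_add_cos_sq a
    have hb := Real.sin_sq_add_cos_sq b
    have hc := Real.sin_sq_add_cos_sq c
    rw [Real.sin_sub, Real.sin_add (a + b) c, Real.sin_add a b, Real.cos_add a b,
      Real.sin_add a c]
    linear_combination
      ((-16) * Real.cos b ^ 4 * Real.sin c ^ 4 + (32) * Real.sin b ^ 2 * Real.cos b ^ 2 * Real.sin c ^ 2 * Real.cos c ^ 2 + (-16) * Real.sin b ^ 4 * Real.cos c ^ 4 + (16) * Real.sin a ^ 2 * Real.sin c ^ 2 * Real.cos c ^ 2 + (16) * Real.sin a ^ 2 * Real.sin c ^ 4 + (-32) * Real.sin a ^ 2 * Real.sin b * Real.cos b * Real.sin c * Real.cos c + (-32) * Real.sin a ^ 2 * Real.sin b ^ 2 * Real.sin c ^ 2 + (16) * Real.sin a ^ 2 * Real.sin b ^ 2 * Real.cos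 b ^ 2 + (16) * Real.sin a ^ 2 * Real.sin b ^ 4) * ha +
      ((-16) * Real.sin c ^ 4 + (-16) * Real.cos b ^ 2 * Real.sin c ^ 4 + (32) * Real.sin b ^ 2 * Real.sin c ^ 2 * Real.cos c ^ 2 + (16) * Real.sin b ^ 2 * Real.sin c ^ 4 + (-32) * Real.sin a * Real.cos a * Real.sin c ^ 3 * Real.cos c + (-32) * Real.sin a * Real.cos a * Real.cos b ^ 2 * Real.sin c ^ 3 * Real.cos c + (32) * Real.sin a * Real.cos a * Real.sin b * Real.cos b * Real.sin c ^ 2 * Real.cos c ^ 2 + (32) * Real.sin a * Real.cos a * Real.sin b * Real.cos b * Real.sin c ^ 4 + (32) * Real.sin a * Real.cos a * Real.sin b ^ 2 * Real.sin c * Real.cos c ^ 3 + (-16) * Real.sin a ^ 2 * Real.sin c ^ 2 * Real.cos c ^ 2 + (16) * Real.sin a ^ 2 * Real.sin c ^ 4 + (-16) * Real.sin a ^ 2 * Real.cos b ^ 2 * Real.sin c ^ 2 * Real.cos c ^ 2 + (16) * Real.sin a ^ 2 * Real.cos b ^ 2 * Real.sin c ^ 4 + (32) * Real.sin a ^ 2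 * Real.sin b * Real.cos b * Real.sin c * Real.cos c ^ 3 + (32) * Real.sin a ^ 2 * Real.sin b * Real.cos b * Real.sin c ^ 3 * Real.cos c + (16) * Real.sin a ^ 2 * Real.sin b ^ 2 + (-16) * Real.sin a ^ 2 * Real.sin b ^ 2 * Real.cos c ^ 4 + (-80) * Real.sin a ^ 2 * Real.sin b ^ 2 * Real.sin c ^ 2 * Real.cos c ^ 2 + (-32) * Real.sin a ^ 2 * Real.sin b ^ 2 * Real.sin c ^ 4) * hb +
      ((32) * Real.sin b ^ 2 * Real.sin c ^ 2 + (-16) * Real.sin b ^ 4 + (-16) * Real.sin b ^ 4 * Real.cos c ^ 2 + (-16) * Real.sin b ^ 4 * Real.sin c ^ 2 + (32) * Real.sin a * Real.cos a * Real.sin b * Real.cos b * Real.sin c ^ 2 + (32) * Real.sin a * Real.cos a * Real.sin b ^ 2 * Real.sin c * Real.cos c + (-32) * Real.sin a * Real.cos a * Real.sin b ^ 3 * Real.cos b + (-32) * Real.sin a * Real.cos a * Real.sin b ^ 3 * Real.cos b * Real.cos c ^ 2 + (-32) * Real.sin a * Real.cos a * Real.sin b ^ 3 * Real.cos b * Real.sin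 c ^ 2 + (32) * Real.sin a ^ 2 * Real.sin b * Real.cos b * Real.sin c * Real.cos c + (-16) * Real.sin a ^ 2 * Real.sin b ^ 2 + (-16) * Real.sin a ^ 2 * Real.sin b ^ 2 * Real.cos c ^ 2 + (-48) * Real.sin a ^ 2 * Real.sin b ^ 2 * Real.sin c ^ 2 + (32) * Real.sin a ^ 2 * Real.sin b ^ 4 + (32) * Real.sin a ^ 2 * Real.sin b ^ 4 * Real.cos c ^ 2 + (32) * Real.sin a ^ 2 * Real.sin b ^ 4 * Real.sin c ^ 2) * hc
  rw [key, Real.sqrt_sq_eq_abs, abs_mul, abs_mul]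
  norm_num

theorem stmt_6 (d : ℕ) (hd : 5 ≤ d) (κ : ℤ) (hκ : κ = -2 ∨ κ = 0 ∨ κ = 2)
    (hκd : κ ≠ 0 → (3 : ℤ) ∣ (d : ℤ))
    (l m n : ℤ) (h0 : 0 ≤ l) (h1 : l < m) (h2 : m < n) (h3 : n < (d : ℤ))
    (hσ : ¬ ((d : ℤ) ∣ (l + m + n - κ))) :
    let φ : ℤ → ℝ := fun j => (3 * (j : ℝ) - (κ : ℝ)) * π / (3 * d)
    let s : ℤ → ℝ := fun a => Real.sin ((a : ℝ) * π / d)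
    let v₁ : ℂ := ipt (φ l) (φ m)
    let v₂ : ℂ := ipt (φ l) (φ n)
    let v₃ : ℂ := ipt (φ m) (φ n)
    v₁ ≠ v₂ ∧ v₁ ≠ v₃ ∧ v₂ ≠ v₃ ∧
    ‖v₁ - v₂‖ = 4 * |s (l + m + n - κ)| * s (n - m) ∧
    ‖v₁ - v₃‖ = 4 * |s (l + m + n - κ)| * s ((d : ℤ) + l - n) ∧
    ‖v₂ - v₃‖ = 4 * |s (l + m + n - κ)| * s (m - l) := by
  intro φ s v₁ v₂ v₃
  have hdR : (0 : ℝ) < (d : ℝ) := by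
    have : (0 : ℕ) < d := by omega
    exact_mod_cast this
  have hdne : (d : ℝ) ≠ 0 := ne_of_gt hdR
  have hπ : (0 : ℝ) < π := Real.pi_pos
  -- sum of angles
  have hsum : ∀ a b c : ℤ, φ a + φ b + φ c = ((a + b + c - κ : ℤ) : ℝ) * π / d := by
    intro a b c
    show (3 * (a : ℝ) - κ) * π / (3 * d) + (3 * (b : ℝ) - κ) * π / (3 * d) +
      (3 * (c : ℝ) - κ) * π / (3 * d) = _
    push_cast
    field_simp
    ring
  have hdiff : ∀ a b : ℤ, φ a - φ b = ((a - b : ℤ) : ℝ) * π / d := by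
    intro a b
    show (3 * (a : ℝ) - κ) * π / (3 * d) - (3 * (b : ℝ) - κ) * π / (3 * d) = _
    push_cast
    field_simp
    ring
  -- positivity of sines of differences
  have hs_pos : ∀ a : ℤ, 0 < a → a < d → 0 < s a := by
    intro a ha had
    apply Real.sin_pos_of_pos_of_lt_pi
    · apply div_pos _ hdR
      apply mul_pos _ hπ
      exact_mod_cast ha
    · rw [div_lt_iff₀ hdR]
      have : (a : ℝ) < d := by exact_mod_cast had
      nlinarith
  -- the key sine is nonzero
  have hσ' : s (l + m + n - κ) ≠ 0 := by
    intro h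
    rw [Real.sin_eq_zero_iff] at h
    obtain ⟨k, hk⟩ := h
    apply hσ
    refine ⟨k, ?_⟩
    have h2' : ((l + m + n - κ : ℤ) : ℝ) * π = ((d : ℝ) * k) * π := by
      field_simp at hk
      push_cast at hk ⊢
      linear_combination (-π) * hk
    have : ((l + m + n - κ : ℤ) : ℝ) = (d : ℝ) * k :=
      mul_right_cancel₀ (ne_of_gt hπ) h2'
    exact_mod_cast this
  -- side 1 : v₁ - v₂
  have e1 : ‖v₁ - v₂‖ = 4 * |s (l + m + n - κ)| * s (n - m) := by
    have := ipt_dist (φ l) (φ m) (φ n)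
    rw [hsum l m n] at this
    have hd' : φ m - φ n = -(((n - m : ℤ) : ℝ) * π / d) := by
      rw [hdiff m n]; push_cast; ring
    rw [hd', Real.sin_neg, abs_neg] at this
    rw [show v₁ - v₂ = ipt (φ l) (φ m) - ipt (φ l) (φ n) from rfl, this]
    rw [abs_of_pos (hs_pos (n - m) (by omega) (by omega))]
  -- side 2 : v₁ - v₃
  have e2 : ‖v₁ - v₃‖ = 4 * |s (l + m + n - κ)| * s ((d : ℤ) + l - n) := by
    have := ipt_dist (φ m) (φ l) (φ n)
    have hsum' : φ m + φ l + φ n = ((l + m + n - κ : ℤ) : ℝ) * π / d := by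
      rw [show φ m + φ l + φ n = φ l + φ m + φ n by ring, hsum l m n]
    rw [hsum'] at this
    have hd' : φ l - φ n = -(((n - l : ℤ) : ℝ) * π / d) := by
      rw [hdiff l n]; push_cast; ring
    rw [hd', Real.sin_neg, abs_neg] at this
    have hv : v₁ - v₃ = ipt (φ m) (φ l) - ipt (φ m) (φ n) := by
      show ipt (φ l) (φ m) - ipt (φ m) (φ n) = _
      rw [ipt_comm (φ l) (φ m)]
    rw [hv, this]
    rw [abs_of_pos (hs_pos (n - l) (by omega) (by omega))]
    have : s ((d : ℤ) + l - n) = s (n - l) := by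
      show Real.sin _ = Real.sin _
      rw [show (((d : ℤ) + l - n : ℤ) : ℝ) * π / d = π - ((n - l : ℤ) : ℝ) * π / d by
        push_cast; field_simp; ring]
      exact Real.sin_pi_sub _
    rw [this]
  -- side 3 : v₂ - v₃
  have e3 : ‖v₂ - v₃‖ = 4 * |s (l + m + n - κ)| * s (m - l) := by
    have := ipt_dist (φ n) (φ l) (φ m)
    have hsum' : φ n + φ l + φ m = ((l + m + n - κ : ℤ) : ℝ) * π / d := by
      rw [show φ n + φ l + φ m = φ l + φ m + φ n by ring, hsum l m n]
    rw [hsum'] at this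
    have hd' : φ l - φ m = -(((m - l : ℤ) : ℝ) * π / d) := by
      rw [hdiff l m]; push_cast; ring
    rw [hd', Real.sin_neg, abs_neg] at this
    have hv : v₂ - v₃ = ipt (φ n) (φ l) - ipt (φ n) (φ m) := by
      show ipt (φ l) (φ n) - ipt (φ m) (φ n) = _
      rw [ipt_comm (φ l) (φ n), ipt_comm (φ m) (φ n)]
    rw [hv, this]
    rw [abs_of_pos (hs_pos (m - l) (by omega) (by omega))]
  -- distinctness
  have habs : ∀ z : ℂ, ∀ r : ℝ, ‖z‖ = r → 0 < r → z ≠ 0 := by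
    intro z r hz hr h0
    rw [h0] at hz
    simp at hz
    rw [← hz] at hr
    exact lt_irrefl 0 hr
  have hpos : 0 < |s (l + m + n - κ)| := abs_pos.mpr hσ'
  have four : (0:ℝ) < 4 := by norm_num
  refine ⟨?_, ?_, ?_, e1, e2, e3⟩
  · intro h
    exact habs _ _ e1 (mul_pos (mul_pos four hpos) (hs_pos _ (by omega) (by omega)))
      (sub_eq_zero.mpr h)
  · intro h
    exact habs _ _ e2 (mul_pos (mul_pos four hpos) (hs_pos _ (by omega) (by omega)))
      (sub_eq_zero.mpr h)
  · intro h
    exact habs _ _ e3 (mul_pos (mul_pos four hpos) (hs_pos _ (by omega) (by omega)))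
      (sub_eq_zero.mpr h)
end

section
/- Let d ≥ 5 be an odd integer not divisible by 3. Then the number of 3-element subsets {λ, μ, ν} of ℤ/dℤ with λ + μ + ν ≡ 1 (mod d) or λ + μ + ν ≡ −1 (mod d) equals d − 1 + 4·⌊(d−3)²/12⌉. -/
open Finset

lemma count6 (d : ℕ) [NeZero d] (hd : 5 ≤ d) (h2 : IsUnit (2 : ZMod d))
    (h3 : IsUnit (3 : ZMod d)) (c : ZMod d) :
    6 * (((Finset.univ : Finset (ZMod d)).powersetCard 3).filter
        (fun s => (∑ x ∈ s, x) = c)).card = (d - 1) * (d - 2) := by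
  classical
  set S := (((Finset.univ : Finset (ZMod d)).powersetCard 3).filter
      (fun s => (∑ x ∈ s, x) = c)) with hS
  set T : Finset (ZMod d × ZMod d) := Finset.univ.filter
      (fun p => p.1 ≠ p.2 ∧ p.1 + p.1 + p.2 ≠ c ∧ p.1 + p.2 + p.2 ≠ c) with hT
  -- every p in T maps into S
  have hmap : ∀ p ∈ T, ({p.1, p.2, c - p.1 - p.2} : Finset (ZMod d)) ∈ S := by
    intro p hp
    simp only [hT, mem_filter, mem_univ, true_and] at hp
    obtain ⟨hne, h11, h12⟩ := hp
    have ht1 : p.1 ≠ c - p.1 - p.2 := by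
      intro h; exact h11 (by linear_combination h)
    have ht2 : p.2 ≠ c - p.1 - p.2 := by
      intro h; exact h12 (by linear_combination h)
    have hcard : ({p.1, p.2, c - p.1 - p.2} : Finset (ZMod d)).card = 3 := by
      rw [card_insert_of_notMem (by simp [hne, ht1]),
        card_insert_of_notMem (by simp [ht2]), card_singleton]
    rw [hS, mem_filter, mem_powersetCard_univ]
    refine ⟨hcard, ?_⟩
    rw [sum_insert (by simp [hne, ht1]), sum_insert (by simp [ht2]), sum_singleton]
    ring
  have hfiber : ∀ s ∈ S,
      T.filter (fun p => ({p.1, p.2, c - p.1 - p.2} : Finset (ZMod d)) = s) = s.offDiag := by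
    intro s hs
    rw [hS, mem_filter, mem_powersetCard_univ] at hs
    obtain ⟨hc3, hsum⟩ := hs
    ext ⟨a, b⟩
    simp only [hT, mem_filter, mem_univ, true_and, mem_offDiag]
    constructor
    · rintro ⟨⟨hab, h11, h12⟩, heq⟩
      refine ⟨?_, ?_, hab⟩
      · rw [← heq]; simp
      · rw [← heq]; simp
    · rintro ⟨ha, hb, hab⟩
      have hsub : ({a, b} : Finset (ZMod d)) ⊆ s := by
        intro x hx; simp at hx; rcases hx with rfl | rfl <;> assumption
      have hcu : (s \ {a, b}).card = 1 := by
        rw [card_sdiff_of_subset hsub, hc3, card_insert_of_notMem (by simp [hab]), card_singleton]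
      obtain ⟨t, ht⟩ := card_eq_one.mp hcu
      have hts : t ∈ s \ ({a, b} : Finset (ZMod d)) := ht ▸ mem_singleton_self t
      have hta : t ≠ a := by simp only [mem_sdiff, mem_insert, mem_singleton] at hts; tauto
      have htb : t ≠ b := by simp only [mem_sdiff, mem_insert, mem_singleton] at hts; tauto
      have hss : s = {a, b, t} := by
        have := Finset.union_sdiff_of_subset hsub
        rw [ht] at this
        rw [← this]
        ext x; simp only [mem_union, mem_insert, mem_singleton]; tauto
      have hsum3 : a + b + t = c := by
        rw [hss, sum_insert (by simp [hab, hta.symm]), sum_insert (by simp [htb.symm]),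
          sum_singleton] at hsum
        linear_combination hsum
      have htval : t = c - a - b := by linear_combination hsum3
      refine ⟨⟨hab, ?_, ?_⟩, ?_⟩
      · intro h; exact hta (by linear_combination hsum3 - h)
      · intro h; exact htb (by linear_combination hsum3 - h)
      · rw [hss, ← htval]
  have hcard3 : ∀ s ∈ S, s.card = 3 := by
    intro s hs
    have := (mem_filter.mp hs).1
    simpa [mem_powersetCard_univ] using this
  have hTS : T.card = 6 * S.card := by
    have step : ∀ s ∈ S,
        (T.filter (fun p => ({p.1, p.2, c - p.1 - p.2} : Finset (ZMod d)) = s)).card = 6 := by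
      intro s hs
      rw [hfiber s hs, offDiag_card, hcard3 s hs]
    rw [card_eq_sum_card_fiberwise hmap, Finset.sum_congr rfl step, sum_const, smul_eq_mul,
      mul_comm]
  have hTcard : T.card = (d - 1) * (d - 2) := by
    have key2 : ∀ x y : ZMod d, x = (↑h2.unit⁻¹ : ZMod d) * y ↔ (2 : ZMod d) * x = y := by
      intro x y
      rw [Units.eq_inv_mul_iff_mul_eq, h2.unit_spec]
    -- fiberwise over the first coordinate
    have hfib1 : ∀ p ∈ T, p.1 ∈ (Finset.univ : Finset (ZMod d)) := fun p _ => mem_univ _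
    rw [card_eq_sum_card_fiberwise hfib1]
    set bad : ZMod d → Finset (ZMod d) := fun a =>
      ({a, c - (a + a), (↑h2.unit⁻¹ : ZMod d) * (c - a)} : Finset (ZMod d)) with hbad
    have hinner : ∀ a : ZMod d, (T.filter (fun p => p.1 = a)).card
        = ((Finset.univ : Finset (ZMod d)) \ bad a).card := by
      intro a
      apply Finset.card_bij (fun p _ => p.2)
      · intro p hp
        simp only [hT, mem_filter, mem_univ, true_and] at hp
        obtain ⟨⟨hne, h11, h12⟩, h1a⟩ := hp
        subst h1a
        simp only [mem_sdiff, mem_univ, true_and, hbad, mem_insert, mem_singleton]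
        push_neg
        refine ⟨fun h => hne h.symm, fun h => h11 (by linear_combination h), fun h => ?_⟩
        have h' := (key2 _ _).mp h
        exact h12 (by linear_combination h')
      · intro p hp q hq h
        simp only [hT, mem_filter] at hp hq
        have : p.1 = q.1 := hp.2.trans hq.2.symm
        exact Prod.ext this h
      · intro b hb
        simp only [mem_sdiff, mem_univ, true_and, hbad, mem_insert, mem_singleton] at hb
        push_neg at hb
        obtain ⟨hb1, hb2, hb3⟩ := hb
        refine ⟨(a, b), ?_, rfl⟩
        simp only [hT, mem_filter, mem_univ, true_and]
        exact ⟨⟨fun h => hb1 h.symm, fun h => hb2 (by linear_combination h),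
          fun h => hb3 ((key2 b (c - a)).mpr (by linear_combination h))⟩, trivial⟩
    have hU : (Finset.univ : Finset (ZMod d)).card = d := by
      rw [Finset.card_univ, ZMod.card]
    have hbadcard : ∀ a : ZMod d, (bad a).card = if a + a + a = c then 1 else 3 := by
      intro a
      by_cases h : a + a + a = c
      · rw [if_pos h]
        have e1 : c - (a + a) = a := by linear_combination -h
        have e2 : (↑h2.unit⁻¹ : ZMod d) * (c - a) = a :=
          ((key2 a (c - a)).mpr (by linear_combination h)).symm
        rw [hbad]
        simp only [e1, e2, insert_idem, insert_eq_self, mem_singleton]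
        simp
      · rw [if_neg h, hbad]
        have e1 : a ≠ c - (a + a) := fun hh => h (by linear_combination hh)
        have e2 : a ≠ (↑h2.unit⁻¹ : ZMod d) * (c - a) := by
          intro hh
          have hh' := (key2 _ _).mp hh
          exact h (by linear_combination hh')
        have e3 : c - (a + a) ≠ (↑h2.unit⁻¹ : ZMod d) * (c - a) := by
          intro hh
          have hh' := (key2 _ _).mp hh
          exact h (by linear_combination -hh')
        rw [card_insert_of_notMem (by simp [e1, e2]),
          card_insert_of_notMem (by simp [e3]), card_singleton]
    have hsum : ∀ a : ZMod d, ((Finset.univ : Finset (ZMod d)) \ bad a).card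
        = d - (if a + a + a = c then 1 else 3) := by
      intro a
      rw [card_sdiff_of_subset ?_, hU, hbadcard a]
      · exact Finset.subset_univ _
    have key3 : ∀ a : ZMod d, (a + a + a = c) ↔ a = (↑h3.unit⁻¹ : ZMod d) * c := by
      intro a
      rw [Units.eq_inv_mul_iff_mul_eq, h3.unit_spec]
      constructor <;> intro h <;> linear_combination h
    set a0 : ZMod d := (↑h3.unit⁻¹ : ZMod d) * c with ha0
    calc ∑ a : ZMod d, (T.filter (fun p => p.1 = a)).card
        = ∑ a : ZMod d, (d - (if a + a + a = c then 1 else 3)) := by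
          refine Finset.sum_congr rfl fun a _ => ?_
          rw [hinner a, hsum a]
      _ = (d - 1) + ∑ a ∈ Finset.univ.erase a0, (d - (if a + a + a = c then 1 else 3)) := by
          rw [← Finset.add_sum_erase _ _ (mem_univ a0)]
          congr 1
          rw [if_pos ((key3 a0).mpr rfl)]
      _ = (d - 1) + (d - 1) * (d - 3) := by
          congr 1
          rw [Finset.sum_congr rfl (fun a ha => ?_), sum_const, smul_eq_mul,
            card_erase_of_mem (mem_univ a0), Finset.card_univ, ZMod.card]
          rw [if_neg fun hh => (Finset.mem_erase.mp ha).1 ((key3 a).mp hh)]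
      _ = (d - 1) * (d - 2) := by
          obtain ⟨k, rfl⟩ : ∃ k, d = k + 5 := ⟨d - 5, by omega⟩
          have e1 : k + 5 - 1 = k + 4 := by omega
          have e2 : k + 5 - 2 = k + 3 := by omega
          have e3 : k + 5 - 3 = k + 2 := by omega
          rw [e1, e2, e3]; ring
  omega

theorem stmt_12 (d : ℕ) [NeZero d] (hd : 5 ≤ d) (hodd : Odd d) (h3 : ¬ (3 ∣ d)) :
    ((((Finset.univ : Finset (ZMod d)).powersetCard 3).filter
        (fun s => (∑ x ∈ s, x) = (1 : ZMod d) ∨ (∑ x ∈ s, x) = (-1 : ZMod d))).card : ℤ) =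
      (d : ℤ) - 1 + 4 * round (((d : ℚ) - 3) ^ 2 / 12) := by
  classical
  have h2u : IsUnit (2 : ZMod d) := by
    have h : ((2 : ℕ) : ZMod d) = (2 : ZMod d) := by push_cast; ring
    rw [← h, ZMod.isUnit_iff_coprime]
    exact (Nat.Prime.coprime_iff_not_dvd Nat.prime_two).mpr
      (by obtain ⟨k, hk⟩ := hodd; omega)
  have h3u : IsUnit (3 : ZMod d) := by
    have h : ((3 : ℕ) : ZMod d) = (3 : ZMod d) := by push_cast; ring
    rw [← h, ZMod.isUnit_iff_coprime]
    exact (Nat.Prime.coprime_iff_not_dvd Nat.prime_three).mpr h3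
  have hne : (1 : ZMod d) ≠ (-1 : ZMod d) := by
    intro h
    have h2 : ((2 : ℕ) : ZMod d) = 0 := by push_cast; linear_combination h
    rw [ZMod.natCast_eq_zero_iff] at h2
    have := Nat.le_of_dvd (by norm_num) h2
    omega
  have hsplit : (((Finset.univ : Finset (ZMod d)).powersetCard 3).filter
        (fun s => (∑ x ∈ s, x) = (1 : ZMod d) ∨ (∑ x ∈ s, x) = (-1 : ZMod d))).card
      = (((Finset.univ : Finset (ZMod d)).powersetCard 3).filter
        (fun s => (∑ x ∈ s, x) = (1 : ZMod d))).card
      + (((Finset.univ : Finset (ZMod d)).powersetCard 3).filter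
        (fun s => (∑ x ∈ s, x) = (-1 : ZMod d))).card := by
    rw [Finset.filter_or, Finset.card_union_of_disjoint]
    refine Finset.disjoint_filter.mpr ?_
    intro s _ h1 hm1
    exact hne (h1.symm.trans hm1)
  have c1 := count6 d hd h2u h3u 1
  have cm1 := count6 d hd h2u h3u (-1)
  have h6 : d % 6 = 1 ∨ d % 6 = 5 := by
    obtain ⟨k, hk⟩ := hodd; omega
  obtain ⟨m, hm⟩ : ∃ m : ℤ, ((d : ℤ) - 3) ^ 2 = 12 * m + 4 := by
    rcases h6 with h | h
    · obtain ⟨l, hl⟩ : ∃ l : ℤ, (d : ℤ) = 6 * l + 1 := ⟨(d : ℤ) / 6, by omega⟩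
      exact ⟨3 * l ^ 2 - 2 * l, by rw [hl]; ring⟩
    · obtain ⟨l, hl⟩ : ∃ l : ℤ, (d : ℤ) = 6 * l + 5 := ⟨(d : ℤ) / 6, by omega⟩
      exact ⟨3 * l ^ 2 + 2 * l, by rw [hl]; ring⟩
  have hround : round (((d : ℚ) - 3) ^ 2 / 12) = m := by
    have hq : ((d : ℚ) - 3) ^ 2 = 12 * (m : ℚ) + 4 := by exact_mod_cast hm
    rw [hq, (show (12 * (m : ℚ) + 4) / 12 = (m : ℚ) + 1/3 by ring), round_eq,
      (show (m : ℚ) + 1/3 + 1/2 = (m : ℚ) + 5/6 by ring), Int.floor_intCast_add]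
    norm_num
  rw [hsplit, hround]
  zify [show 1 ≤ d by omega, show 2 ≤ d by omega] at c1 cm1
  push_cast
  nlinarith [hm, c1, cm1]
end

section
/- Let d ≥ 4 be an even integer not divisible by 3. Then the number of 3-element subsets {λ, μ, ν} of ℤ/dℤ with λ + μ + ν ≡ 1 (mod d) or λ + μ + ν ≡ −1 (mod d) equals d − 2 + 4·⌊(d−3)²/12⌉. -/
open Finset

private lemma N_le (d : ℕ) [NeZero d] (h3 : ¬ (3 ∣ d)) (c c' : ZMod d) :
    (((Finset.univ : Finset (ZMod d)).powersetCard 3).filter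
        (fun s => (∑ x ∈ s, x) = c)).card ≤
    (((Finset.univ : Finset (ZMod d)).powersetCard 3).filter
        (fun s => (∑ x ∈ s, x) = c')).card := by
  have hu : IsUnit (3 : ZMod d) := by
    have := (ZMod.isUnit_iff_coprime 3 d).mpr
      ((Nat.Prime.coprime_iff_not_dvd Nat.prime_three).mpr h3)
    simpa using this
  set t : ZMod d := (3 : ZMod d)⁻¹ * (c' - c) with ht_def
  have ht : (3 : ZMod d) * t = c' - c := by
    rw [ht_def, ← mul_assoc, ZMod.mul_inv_of_unit _ hu, one_mul]
  have hinj : Function.Injective (· + t) := add_left_injective t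
  apply Finset.card_le_card_of_injOn (fun s => s.image (· + t))
  · intro s hs
    simp only [Finset.mem_coe, Finset.mem_filter, Finset.mem_powersetCard_univ] at hs ⊢
    obtain ⟨hcard, hsum⟩ := hs
    refine ⟨by rw [Finset.card_image_of_injective _ hinj, hcard], ?_⟩
    rw [Finset.sum_image (fun x _ y _ h => hinj h), Finset.sum_add_distrib, hsum,
      Finset.sum_const, hcard, nsmul_eq_mul]
    push_cast
    linear_combination ht
  · intro s _ s' _ h
    exact Finset.image_injective hinj h

theorem stmt_13 (d : ℕ) [NeZero d] (hd : 4 ≤ d) (heven : Even d) (h3 : ¬ (3 ∣ d)) :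
    ((((Finset.univ : Finset (ZMod d)).powersetCard 3).filter
        (fun s => (∑ x ∈ s, x) = (1 : ZMod d) ∨ (∑ x ∈ s, x) = (-1 : ZMod d))).card : ℤ) =
      (d : ℤ) - 2 + 4 * round (((d : ℚ) - 3) ^ 2 / 12) := by
  set N : ZMod d → ℕ := fun c =>
    (((Finset.univ : Finset (ZMod d)).powersetCard 3).filter
        (fun s => (∑ x ∈ s, x) = c)).card with hN
  have hNconst : ∀ c : ZMod d, N c = N 1 := fun c =>
    le_antisymm (N_le d h3 c 1) (N_le d h3 1 c)
  -- the two conditions are disjoint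
  have h1ne : (1 : ZMod d) ≠ (-1 : ZMod d) := by
    intro h
    have h2 : ((2 : ℕ) : ZMod d) = 0 := by push_cast; linear_combination h
    rw [ZMod.natCast_eq_zero_iff] at h2
    exact absurd (Nat.le_of_dvd (by norm_num) h2) (by omega)
  have hsplit :
      (((Finset.univ : Finset (ZMod d)).powersetCard 3).filter
        (fun s => (∑ x ∈ s, x) = (1 : ZMod d) ∨ (∑ x ∈ s, x) = (-1 : ZMod d))).card
        = N 1 + N (-1) := by
    rw [hN, Finset.filter_or, Finset.card_union_of_disjoint]
    rw [Finset.disjoint_filter]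
    intro s _ hs1 hs2
    exact h1ne (hs1.symm.trans hs2)
  -- fiberwise counting
  have hfiber : ((Finset.univ : Finset (ZMod d)).powersetCard 3).card
      = ∑ c : ZMod d, N c :=
    Finset.card_eq_sum_card_fiberwise (fun s _ => Finset.mem_univ _)
  have hchoose : ((Finset.univ : Finset (ZMod d)).powersetCard 3).card = d.choose 3 := by
    rw [Finset.card_powersetCard, Finset.card_univ, ZMod.card]
  have hsum : ∑ c : ZMod d, N c = d * N 1 := by
    rw [Finset.sum_congr rfl (fun c _ => hNconst c), Finset.sum_const, Finset.card_univ,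
      ZMod.card, smul_eq_mul]
  have hdN : d * N 1 = d.choose 3 := by rw [← hsum, ← hfiber, hchoose]
  -- 6 * choose d 3 = d * (d-1) * (d-2)
  have hdesc : 6 * d.choose 3 = d * ((d - 1) * (d - 2)) := by
    calc 6 * d.choose 3 = Nat.factorial 3 * d.choose 3 := by norm_num [Nat.factorial]
      _ = d.descFactorial 3 := (Nat.descFactorial_eq_factorial_mul_choose d 3).symm
      _ = d * ((d - 1) * (d - 2)) := by simp [Nat.descFactorial]; ring
  have hnat : 6 * (d * N 1) = d * ((d - 1) * (d - 2)) := by rw [hdN]; exact hdesc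
  have h6N : (6 : ℤ) * (N 1 : ℤ) = ((d : ℤ) - 1) * ((d : ℤ) - 2) := by
    have hcast := congrArg (fun n : ℕ => (n : ℤ)) hnat
    push_cast [Nat.cast_sub (by omega : 1 ≤ d), Nat.cast_sub (by omega : 2 ≤ d)] at hcast
    have hdne : (d : ℤ) ≠ 0 := by exact_mod_cast (NeZero.ne d)
    apply mul_left_cancel₀ hdne
    linear_combination hcast
  -- the round computation
  obtain ⟨k, hk⟩ : ∃ k : ℤ, ((d : ℤ) - 3) ^ 2 = 12 * k + 1 := by
    have h2 : d % 2 = 0 := Nat.even_iff.mp heven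
    have h3' : d % 3 ≠ 0 := fun h => h3 (Nat.dvd_of_mod_eq_zero h)
    have h6 : d % 6 = 2 ∨ d % 6 = 4 := by omega
    obtain ⟨q, hq⟩ : ∃ q, d = 6 * q + d % 6 := ⟨d / 6, by omega⟩
    rcases h6 with h | h
    · exact ⟨3 * (q : ℤ) ^ 2 - q, by rw [hq, h]; push_cast; ring⟩
    · exact ⟨3 * (q : ℤ) ^ 2 + q, by rw [hq, h]; push_cast; ring⟩
  have hround : round (((d : ℚ) - 3) ^ 2 / 12) = k := by
    have hkq : ((d : ℚ) - 3) ^ 2 = 12 * (k : ℚ) + 1 := by exact_mod_cast hk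
    rw [hkq, show (12 * (k : ℚ) + 1) / 12 = (k : ℚ) + 1 / 12 by ring, round_intCast_add]
    have h0 : round ((1 : ℚ) / 12) = 0 := by
      rw [round_eq]
      norm_num
    rw [h0, add_zero]
  rw [hsplit, hround, hNconst (-1)]
  have hfin : (6 : ℤ) * (N 1 : ℤ) = 3 * ((d : ℤ) - 2 + 4 * k) := by
    linear_combination h6N + hk
  push_cast
  linarith
end

section
/- Let d = 2q with q ≥ 3 an integer. For c = 0, 1, …, q − 1 the intersection points v_c := p(cπ/d, (q+c)π/d) satisfy v_c = (−cos(2πc/q), −sin(2πc/q)); hence they are the vertices of a regular q-gon inscribed in the unit circle, and consecutive vertices satisfy |v_{c+1} − v_c| = 2 sin(π/q) = 4 sin(π/d)·sin((q−1)π/d). -/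
open Real

lemma ipt_eq (φ : ℝ) : ipt φ (π / 2 + φ) =
    ((-Real.cos (4 * φ) : ℝ) : ℂ) + ((-Real.sin (4 * φ) : ℝ) : ℂ) * Complex.I := by
  have hs : Real.sin (π / 2 + φ) = Real.cos φ := by rw [Real.sin_add]; simp
  have hc : Real.cos (π / 2 + φ) = -Real.sin φ := by rw [Real.cos_add]; simp
  have hpyth : Real.sin φ ^ 2 + Real.cos φ ^ 2 = 1 := Real.sin_sq_add_cos_sq φ
  have h4 : (4 : ℝ) * φ = 2 * (2 * φ) := by ring
  have h2s : Real.sin (2 * φ) = 2 * Real.sin φ * Real.cos φ := Real.sin_two_mul φ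
  have h2c : Real.cos (2 * φ) = 1 - 2 * Real.sin φ ^ 2 := by
    rw [Real.cos_two_mul']; nlinarith
  have hcos4 : Real.cos (4 * φ) = 1 - 2 * Real.sin (2 * φ) ^ 2 := by
    rw [h4, Real.cos_two_mul']; nlinarith [Real.sin_sq_add_cos_sq (2 * φ)]
  have hsin4 : Real.sin (4 * φ) = 2 * Real.sin (2 * φ) * Real.cos (2 * φ) := by
    rw [h4, Real.sin_two_mul]
  have hssum : Real.sin (φ + (π / 2 + φ)) = Real.cos (2 * φ) := by
    have : φ + (π / 2 + φ) = π / 2 + 2 * φ := by ring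
    rw [this, Real.sin_add]; simp
  have e1 : 3 - 4 * (Real.sin φ ^ 2 - Real.sin φ ^ 2 * Real.cos φ ^ 2 + Real.cos φ ^ 2 +
      Real.cos φ * -Real.sin φ * Real.sin φ * Real.cos φ) = -Real.cos (4 * φ) := by
    rw [hcos4, h2s]; nlinarith
  have e2 : -4 * Real.sin φ * Real.cos φ * Real.cos (2 * φ) = -Real.sin (4 * φ) := by
    rw [hsin4, h2s]; ring
  unfold ipt
  rw [hs, hc, hssum, e1, e2]

lemma two_sub_two_cos (a b : ℝ) :
    (Real.cos a - Real.cos b) ^ 2 + (Real.sin a - Real.sin b) ^ 2 = 2 - 2 * Real.cos (b - a) := by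
  have h := Real.cos_sub b a
  nlinarith [Real.sin_sq_add_cos_sq a, Real.sin_sq_add_cos_sq b]

lemma sub_pts (a b c d : ℝ) :
    (((-a : ℝ) : ℂ) + ((-b : ℝ) : ℂ) * Complex.I) -
      (((-c : ℝ) : ℂ) + ((-d : ℝ) : ℂ) * Complex.I) =
    ((c - a : ℝ) : ℂ) + ((d - b : ℝ) : ℂ) * Complex.I := by
  push_cast; ring

theorem stmt_15 (q : ℕ) (hq : 3 ≤ q) :
    let d : ℕ := 2 * q
    let v : ℕ → ℂ := fun c => ipt ((c : ℝ) * π / d) (((q : ℝ) + (c : ℝ)) * π / d)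
    ∀ c : ℕ, c < q →
      v c = (((-Real.cos (2 * π * c / q)) : ℝ) : ℂ) +
          (((-Real.sin (2 * π * c / q)) : ℝ) : ℂ) * Complex.I ∧
      ‖v c‖ = 1 ∧
      ‖v (c + 1) - v c‖ = 2 * Real.sin (π / q) ∧
      2 * Real.sin (π / q) = 4 * Real.sin (π / d) * Real.sin (((q : ℝ) - 1) * π / d) := by
  intro d v c hc
  have hq3 : (3 : ℝ) ≤ q := by exact_mod_cast hq
  have hq0 : (q : ℝ) ≠ 0 := by positivity
  have hd : (d : ℝ) = 2 * q := by push_cast [d]; ring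
  have key : ∀ m : ℕ, v m = (((-Real.cos (2 * π * m / q)) : ℝ) : ℂ) +
      (((-Real.sin (2 * π * m / q)) : ℝ) : ℂ) * Complex.I := by
    intro m
    have harg : ((q : ℝ) + (m : ℝ)) * π / d = π / 2 + (m : ℝ) * π / d := by
      rw [hd]; field_simp
    have h4 : 4 * ((m : ℝ) * π / d) = 2 * π * m / q := by
      rw [hd]; field_simp; ring
    show ipt ((m : ℝ) * π / d) (((q : ℝ) + (m : ℝ)) * π / d) = _
    rw [harg, ipt_eq, h4]
  have keyc := key c
  refine ⟨keyc, ?_, ?_, ?_⟩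
  · rw [keyc, Complex.norm_add_mul_I]
    have : (-Real.cos (2 * π * c / q)) ^ 2 + (-Real.sin (2 * π * c / q)) ^ 2 = 1 := by
      nlinarith [Real.sin_sq_add_cos_sq (2 * π * c / q)]
    rw [this, Real.sqrt_one]
  · rw [key (c + 1), keyc, sub_pts, Complex.norm_add_mul_I]
    have hcast : 2 * π * ((c + 1 : ℕ) : ℝ) / q = 2 * π * ((c : ℝ) + 1) / q := by push_cast; ring
    rw [hcast]
    have hdiff : 2 * π * ((c : ℝ) + 1) / q - 2 * π * c / q = 2 * (π / q) := by
      field_simp; ring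
    have hchord : (Real.cos (2 * π * c / q) - Real.cos (2 * π * ((c : ℝ) + 1) / q)) ^ 2 +
        (Real.sin (2 * π * c / q) - Real.sin (2 * π * ((c : ℝ) + 1) / q)) ^ 2 =
        (2 * Real.sin (π / q)) ^ 2 := by
      rw [two_sub_two_cos, hdiff, Real.cos_two_mul']
      nlinarith [Real.sin_sq_add_cos_sq (π / q)]
    rw [hchord]
    have hnn : 0 ≤ 2 * Real.sin (π / q) := by
      have h1 : 0 ≤ Real.sin (π / q) := Real.sin_nonneg_of_nonneg_of_le_pi
        (by positivity) (by
          rw [div_le_iff₀ (by positivity)]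
          nlinarith [Real.pi_pos])
      linarith
    exact Real.sqrt_sq hnn
  · have h1 : ((q : ℝ) - 1) * π / d = π / 2 - π / d := by
      rw [hd]; field_simp
    have h2 : π / q = 2 * (π / d) := by rw [hd]; field_simp
    rw [h1, Real.sin_pi_div_two_sub, h2, Real.sin_two_mul]
    ring
end

section
/- Let d ≥ 5 be an integer not divisible by 3, let λ, μ, ν be integers with λ + μ + ν ≡ −1 (mod d) and pairwise distinct modulo d, let p be an integer with 1 ≤ p ≤ d − 1, and let n be an integer with 3n ≡ p + 1 (mod d). Set φ_j := jπ/d. Then the triangle with vertices p(φ_{λ+n}, φ_{μ+n}), p(φ_{λ+n}, φ_{ν+n}), p(φ_{μ+n}, φ_{ν+n}) is a copy of the triangle with vertices p(φ_λ, φ_μ), p(φ_λ, φ_ν), p(φ_μ, φ_ν) scaled by ι_{d,p} := sin(pπ/d)/sin(π/d): each of the three corresponding pairwise distances of the first triple equals ι_{d,p} times that of the second triple. -/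
open Real

lemma ipt_sub (φ ψ χ : ℝ) :
    ipt φ ψ - ipt φ χ =
      ((-4 * Real.sin (ψ - χ) * Real.sin (φ + ψ + χ) : ℝ) : ℂ) *
        (Complex.cos φ + Complex.sin φ * Complex.I) := by
  rw [← Complex.ofReal_cos, ← Complex.ofReal_sin]
  apply Complex.ext
  · simp only [ipt, Complex.add_re, Complex.sub_re, Complex.mul_re, Complex.ofReal_re,
      Complex.ofReal_im, Complex.I_re, Complex.I_im, Complex.mul_im, Complex.add_im]
    rw [Real.sin_sub, Real.sin_add (φ + ψ) χ, Real.sin_add φ ψ, Real.cos_add φ ψ]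
    ring_nf
    linear_combination (-4*Real.sin χ^2 + 4*Real.sin ψ^2) * Real.sin_sq_add_cos_sq φ +
      (-4*Real.cos φ^2 + 4*Real.cos φ^2*Real.cos χ^2 -
        4*Real.sin φ*Real.cos φ*Real.sin χ*Real.cos χ) * Real.sin_sq_add_cos_sq ψ +
      (4*Real.cos φ^2 - 4*Real.cos φ^2*Real.cos ψ^2 +
        4*Real.sin φ*Real.cos φ*Real.sin ψ*Real.cos ψ) * Real.sin_sq_add_cos_sq χ
  · simp only [ipt, Complex.add_im, Complex.sub_im, Complex.mul_im, Complex.ofReal_re,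
      Complex.ofReal_im, Complex.I_re, Complex.I_im, Complex.mul_re, Complex.add_re]
    rw [Real.sin_sub, Real.sin_add (φ + ψ) χ, Real.sin_add φ ψ, Real.cos_add φ ψ,
      Real.sin_add φ χ]
    ring_nf
    linear_combination (4*Real.sin χ*Real.cos χ - 4*Real.cos ψ^2*Real.sin χ*Real.cos χ -
        4*Real.sin ψ*Real.cos ψ + 4*Real.sin ψ*Real.cos ψ*Real.cos χ^2 +
        4*Real.sin ψ*Real.cos ψ*Real.sin χ^2 -
        4*Real.sin ψ^2*Real.sin χ*Real.cos χ) * Real.sin_sq_add_cos_sq φ +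
      (-4*Real.sin χ*Real.cos χ + 4*Real.cos φ^2*Real.sin χ*Real.cos χ -
        4*Real.sin φ*Real.cos φ + 4*Real.sin φ*Real.cos φ*Real.cos χ^2) *
          Real.sin_sq_add_cos_sq ψ +
      (4*Real.sin ψ*Real.cos ψ - 4*Real.cos φ^2*Real.sin ψ*Real.cos ψ +
        4*Real.sin φ*Real.cos φ - 4*Real.sin φ*Real.cos φ*Real.cos ψ^2) *
          Real.sin_sq_add_cos_sq χ

lemma abs_ipt_sub (φ ψ χ : ℝ) :
    ‖ipt φ ψ - ipt φ χ‖ =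
      4 * |Real.sin (ψ - χ)| * |Real.sin (φ + ψ + χ)| := by
  rw [ipt_sub, norm_mul, Complex.norm_cos_add_sin_mul_I, mul_one, Complex.norm_real, Real.norm_eq_abs,
    abs_mul, abs_mul]
  norm_num

lemma abs_sin_add_int_mul_pi (x : ℝ) (k : ℤ) : |Real.sin (x + k * π)| = |Real.sin x| := by
  rw [Real.sin_add_int_mul_pi]
  rw [abs_mul]
  have : |(-1 : ℝ) ^ k| = 1 := by
    rcases Int.even_or_odd k with h | h
    · rw [h.neg_one_zpow]; norm_num
    · rw [Odd.neg_one_zpow h]; norm_num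
  rw [this, one_mul]

theorem stmt_16 (d : ℕ) (hd : 5 ≤ d) (h3 : ¬ (3 ∣ d)) (a b c : ℤ)
    (hab : ¬ ((d : ℤ) ∣ (b - a))) (hac : ¬ ((d : ℤ) ∣ (c - a)))
    (hbc : ¬ ((d : ℤ) ∣ (c - b)))
    (hsum : (d : ℤ) ∣ (a + b + c + 1))
    (p : ℤ) (hp1 : 1 ≤ p) (hp2 : p ≤ (d : ℤ) - 1)
    (n : ℤ) (hn : (d : ℤ) ∣ (3 * n - (p + 1))) :
    let φ : ℤ → ℝ := fun j => (j : ℝ) * π / d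
    let ι : ℝ := Real.sin ((p : ℝ) * π / d) / Real.sin (π / d)
    ‖ipt (φ (a + n)) (φ (b + n)) - ipt (φ (a + n)) (φ (c + n))‖ =
      ι * ‖ipt (φ a) (φ b) - ipt (φ a) (φ c)‖ ∧
    ‖ipt (φ (a + n)) (φ (b + n)) - ipt (φ (b + n)) (φ (c + n))‖ =
      ι * ‖ipt (φ a) (φ b) - ipt (φ b) (φ c)‖ ∧
    ‖ipt (φ (a + n)) (φ (c + n)) - ipt (φ (b + n)) (φ (c + n))‖ =
      ι * ‖ipt (φ a) (φ c) - ipt (φ b) (φ c)‖ := by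
  intro φ ι
  have hφ : ∀ j : ℤ, φ j = (j : ℝ) * π / d := fun _ => rfl
  have hι : ι = Real.sin ((p : ℝ) * π / d) / Real.sin (π / d) := rfl
  have hdpos : (0 : ℝ) < d := by positivity
  obtain ⟨k1, hk1⟩ := hsum
  obtain ⟨k2, hk2⟩ := hn
  have hppos : 0 < Real.sin ((p : ℝ) * π / d) := by
    apply Real.sin_pos_of_pos_of_lt_pi
    · have : (1 : ℝ) ≤ (p : ℝ) := by exact_mod_cast hp1
      positivity
    · rw [div_lt_iff₀ hdpos]
      have : (p : ℝ) ≤ (d : ℝ) - 1 := by exact_mod_cast hp2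
      nlinarith [Real.pi_pos]
  have h1pos : 0 < Real.sin (π / d) := by
    apply Real.sin_pos_of_pos_of_lt_pi
    · positivity
    · rw [div_lt_iff₀ hdpos]
      have : (5 : ℝ) ≤ (d : ℝ) := by exact_mod_cast hd
      nlinarith [Real.pi_pos]
  have hdiff : ∀ x y : ℤ, φ (x + n) - φ (y + n) = φ x - φ y := by
    intro x y
    rw [hφ, hφ, hφ, hφ]
    push_cast
    field_simp
    ring
  have e1 : ((a : ℝ) + b + c + 1) = (d : ℝ) * k1 := by exact_mod_cast hk1
  have e2 : (3 * (n : ℝ) - ((p : ℝ) + 1)) = (d : ℝ) * k2 := by exact_mod_cast hk2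
  have key : ∀ x y z : ℤ, x + y + z = a + b + c →
      ‖ipt (φ (x + n)) (φ (y + n)) - ipt (φ (x + n)) (φ (z + n))‖ =
        ι * ‖ipt (φ x) (φ y) - ipt (φ x) (φ z)‖ := by
    intro x y z hxyz
    have exyz : (x : ℝ) + y + z = (a : ℝ) + b + c := by exact_mod_cast hxyz
    have s1 : φ (x + n) + φ (y + n) + φ (z + n) =
        (p : ℝ) * π / d + ((k1 + k2 : ℤ) : ℝ) * π := by
      rw [hφ, hφ, hφ]
      push_cast
      field_simp
      linear_combination e1 + e2 + exyz
    have s0 : φ x + φ y + φ z = -(π / d) + ((k1 : ℤ) : ℝ) * π := by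
      rw [hφ, hφ, hφ]
      field_simp
      linear_combination e1 + exyz
    rw [abs_ipt_sub, abs_ipt_sub, hdiff y z, s1, s0, abs_sin_add_int_mul_pi,
      abs_sin_add_int_mul_pi, Real.sin_neg, abs_neg, abs_of_pos hppos, abs_of_pos h1pos, hι]
    field_simp
  refine ⟨key a b c rfl, ?_, ?_⟩
  · rw [ipt_comm (φ (a + n)) (φ (b + n)), ipt_comm (φ a) (φ b)]
    exact key b a c (by ring)
  · rw [ipt_comm (φ (a + n)) (φ (c + n)), ipt_comm (φ (b + n)) (φ (c + n)),
      ipt_comm (φ a) (φ c), ipt_comm (φ b) (φ c)]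
    exact key c a b (by ring)
end
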